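/- Littlewood decomposition of doubled distinct partitions: for any positive integer t, the Littlewood map Ω restricts to a bijection between doubled distinct partitions λ and tuples (λ̃, λ⁰, λ¹, ..., λ^{t-1}) where λ̃ is a doubled distinct t-core, λ⁰ is a doubled distinct partition, λ¹, ..., λ^{t-1} are arbitrary partitions with λ^{t-i} = (λ^i)* for 1 ≤ i ≤ t-1, and the weight satisfies |λ| = |λ̃| + t(|λ⁰| + |λ¹| + ... + |λ^{t-1}|). -/

import Mathlib

open scoped Classical

/-- An integer partition, given by its (0-indexed) sequence of parts. -/
structure IntPartition where
  parts : ℕ → ℕ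
  antitone : Antitone parts
  finite_support : (Function.support parts).Finite

namespace IntPartition

/-- The weight `|λ|` of a partition: the sum of its parts. -/
noncomputable def weight (p : IntPartition) : ℕ := p.finite_support.toFinset.sum p.parts

/-- The conjugate partition, as a function: `conj j` is the number of parts `> j`. -/
noncomputable def conj (p : IntPartition) (j : ℕ) : ℕ := {i | j < p.parts i}.ncard

/-- The cells (boxes) of the Ferrers diagram, 0-indexed. -/
def cells (p : IntPartition) : Set (ℕ × ℕ) := {c | c.2 < p.parts c.1}

lemma cells_finite (p : IntPartition) : p.cells.Finite := by
  have hsub : p.cells ⊆ (Function.support p.parts) ×ˢ (Set.Iio (p.parts 0)) := by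
    rintro ⟨i, j⟩ h
    have hj : j < p.parts i := h
    constructor
    · simp only [Function.mem_support]
      omega
    · exact lt_of_lt_of_le hj (p.antitone (Nat.zero_le i))
  exact (p.finite_support.prod (Set.finite_Iio _)).subset hsub

/-- The cells of the Ferrers diagram as a finset. -/
noncomputable def cellsFinset (p : IntPartition) : Finset (ℕ × ℕ) := p.cells_finite.toFinset

/-- Hook length of the (0-indexed) box `(i,j)`:  `λ_i - j + λ*_j - i - 1` (1-indexed formula). -/
noncomputable def hook (p : IntPartition) (i j : ℕ) : ℕ := p.parts i + p.conj j - i - j - 1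

/-- The multiset of hook lengths of all boxes of `p`. -/
noncomputable def hooks (p : IntPartition) : Multiset ℕ :=
  p.cellsFinset.val.map fun c => p.hook c.1 c.2

/-- The Durfee length: the side of the largest square contained in the diagram. -/
noncomputable def durfee (p : IntPartition) : ℕ := {i | i < p.parts i}.ncard

/-- The sign `δ_λ = (-1)^{D(λ)}`. -/
noncomputable def delta (p : IntPartition) : ℤ := (-1) ^ p.durfee

/-- Self-conjugate partitions: `λ = λ*`. -/
noncomputable def IsSelfConjugate (p : IntPartition) : Prop := ∀ j, p.conj j = p.parts j

/-- Doubled distinct partitions: `λ_i = λ*_i + 1` for `i` in the Durfee square. -/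
noncomputable def IsDoubledDistinct (p : IntPartition) : Prop :=
  ∀ i < p.durfee, p.parts i = p.conj i + 1

/-- `t`-cores: partitions with no hook length divisible by `t`. -/
noncomputable def IsCore (t : ℕ) (p : IntPartition) : Prop := ∀ h ∈ p.hooks, ¬ t ∣ h

/-- The multiset of signed hook lengths `ε_h · h`, where `ε_h = -1` for boxes strictly
above the diagonal and `1` otherwise. -/
noncomputable def signedHooks (p : IntPartition) : Multiset ℤ :=
  p.cellsFinset.val.map fun c => (if c.1 < c.2 then -1 else 1) * (p.hook c.1 c.2 : ℤ)

/-- The multiset of signed hook lengths `ε_h · h` over boxes whose hook length is a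
multiple of `t`. -/
noncomputable def signedHooksT (t : ℕ) (p : IntPartition) : Multiset ℤ :=
  (p.cellsFinset.filter fun c => t ∣ p.hook c.1 c.2).val.map
    fun c => (if c.1 < c.2 then -1 else 1) * (p.hook c.1 c.2 : ℤ)

/-- The multiset of principal hook lengths (hooks of diagonal boxes). -/
noncomputable def principalHooks (p : IntPartition) : Multiset ℕ :=
  (Finset.range p.durfee).val.map fun i => p.hook i i

lemma conj_set_finite (p : IntPartition) (j : ℕ) : {i | j < p.parts i}.Finite := by
  apply p.finite_support.subset
  intro i hi
  simp only [Set.mem_setOf_eq] at hi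
  simp only [Function.mem_support]
  omega

/-- The conjugate partition, as a `IntPartition`. -/
noncomputable def conjugate (p : IntPartition) : IntPartition where
  parts := p.conj
  antitone := fun a b hab =>
    Set.ncard_le_ncard (fun i hi => lt_of_le_of_lt hab hi) (p.conj_set_finite a)
  finite_support := by
    apply (Set.finite_Iio (p.parts 0)).subset
    intro j hj
    obtain ⟨i, hi⟩ := Set.nonempty_of_ncard_ne_zero hj
    exact lt_of_lt_of_le hi (p.antitone (Nat.zero_le i))

end IntPartition

/-- "Infinite" product `∏_{k ≥ 1} f k` of power series, defined coefficientwise;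
this is the honest infinite product whenever `f k ≡ 1 mod X^k`. -/
noncomputable def Pinf {R : Type*} [CommRing R] (f : ℕ → PowerSeries R) : PowerSeries R :=
  PowerSeries.mk fun n => PowerSeries.coeff n (∏ k ∈ Finset.range (n + 1), f (k + 1))

/-- The Euler-type product `E R m = ∏_{k ≥ 1} (1 - x^{m k}) = (q^m; q^m)_∞`. -/
noncomputable def E (R : Type*) [CommRing R] (m : ℕ) : PowerSeries R :=
  Pinf fun k => 1 - PowerSeries.X ^ (m * k)

/-- The binomial series `(1 - x^m)^a` for an exponent `a` in a binomial ring. -/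
noncomputable def binomSeries {R : Type*} [CommRing R] [BinomialRing R] (a : R) (m : ℕ) :
    PowerSeries R :=
  PowerSeries.mk fun n => if m ∣ n then (-1) ^ (n / m) * Ring.choose a (n / m) else 0

/-- `m` is the position of a vertical step (a `0`) in the canonical bi-infinite binary
word of the partition `p`. -/
def zeroPos (p : IntPartition) (m : ℤ) : Prop := ∃ i : ℕ, (p.parts i : ℤ) - i - 1 = m

/-- The Littlewood decomposition, as a relation: `core` and `quot` are the `t`-core and
`t`-quotient of `lam`, expressed via the binary-word encoding: the `k`-th subsequence of
the word of `lam` is the word of `quot k` (up to the shift `s k`), and the `k`-th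
subsequence of the word of `core` is the corresponding flushed word `...000111...` with
the same charge. -/
def IsLittlewood (t : ℕ) (lam core : IntPartition) (quot : ℕ → IntPartition) : Prop :=
  ∃ s : ℕ → ℤ,
    (∀ k < t, ∀ j : ℤ, zeroPos (quot k) j ↔ zeroPos lam (t * (j + s k) + k)) ∧
    (∀ k < t, ∀ j : ℤ, zeroPos core (t * (j + s k) + k) ↔ j < 0)

/-!
A partition is encoded by its beta-set, the positions of the vertical steps of its boundary
word: a set `Z ⊆ ℤ` that differs from the vacuum `Iio 0` in finitely many places and has charge
`#(Z \ Iio 0) - #(Iio 0 \ Z) = 0`; its weight is the energy `∑ m (1_Z m - 1_{m < 0})`.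
Cutting `Z` into residue classes mod `t` gives `t` beta-sets; shifting each one to charge `0`
gives the quotient, and replacing each one by `Iio` of its charge gives the core. Gluing the
shifted quotients back inverts this, and the energy of a residue class splits as `t` times the
energy of its quotient plus a term depending only on its charge, which is shared with the
core. Conjugating a partition reflects its beta-set (`m ↦ -1 - m`, then complement), and `λ`
is doubled distinct iff `m ∈ Z ↔ m ≠ 0 ∧ -m ∉ Z`. This symmetry maps residue `0` to itself
and swaps residues `k` and `t - k` up to reflection, so it holds for `Z` iff it holds for the
core, for the quotient `λ⁰`, and `λ^{t-k} = (λ^k)*`.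
-/

lemma Set.mem_iff_lt_ncard_of_isLowerSet {S : Set ℕ} (hS : S.Finite) (hlow : IsLowerSet S)
    (i : ℕ) : i ∈ S ↔ i < S.ncard := by
  obtain h | ⟨a, rfl⟩ := hlow.eq_univ_or_Iio
  · exact absurd (h ▸ hS) Set.infinite_univ
  · simp

lemma StrictAnti.apply_add_le_sub {b : ℕ → ℤ} (hb : StrictAnti b) (i n : ℕ) :
    b (i + n) ≤ b i - n := by
  induction n with
  | zero => simp
  | succ n ih =>
    have := hb (show i + n < i + (n + 1) by omega)
    push_cast
    omega

namespace BetaSet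

open Function

/-! ### Beta-sets -/

noncomputable def defect (Z : Set ℤ) (m : ℤ) : ℤ :=
  (if m ∈ Z then 1 else 0) - (if m < 0 then 1 else 0)

noncomputable def charge (Z : Set ℤ) : ℤ := ∑ᶠ m, defect Z m

noncomputable def energy (Z : Set ℤ) : ℤ := ∑ᶠ m, m * defect Z m

lemma support_defect_Iio_subset (e : ℤ) :
    support (defect (Set.Iio e)) ⊆ Set.Ico (min e 0) (max e 0) := fun m hm => by
  simp only [mem_support, defect, Set.mem_Iio] at hm
  simp only [Set.mem_Ico]
  split_ifs at hm <;> omega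

lemma hasFiniteSupport_defect_Iio (e : ℤ) : (defect (Set.Iio e)).HasFiniteSupport :=
  (Set.finite_Ico _ _).subset (support_defect_Iio_subset e)

lemma charge_Iio (e : ℤ) : charge (Set.Iio e) = e := by
  rw [charge, finsum_eq_sum_of_support_subset _ (s := Finset.Ico (min e 0) (max e 0))
    (by simpa using support_defect_Iio_subset e)]
  rcases le_total 0 e with he | he
  · rw [min_eq_right he, max_eq_left he, Finset.sum_congr rfl (g := fun _ => 1) fun m hm => ?_]
    · simp [he]
    · simp only [Finset.mem_Ico] at hm
      simp only [defect, Set.mem_Iio]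
      split_ifs <;> omega
  · rw [min_eq_left he, max_eq_right he, Finset.sum_congr rfl (g := fun _ => -1) fun m hm => ?_]
    · simp [he]
    · simp only [Finset.mem_Ico] at hm
      simp only [defect, Set.mem_Iio]
      split_ifs <;> omega

lemma eq_of_subset_of_charge_eq {A B : Set ℤ} (hAB : A ⊆ B) (hB : (defect B).HasFiniteSupport)
    (hA : (defect A).HasFiniteSupport) (h : charge A = charge B) : A = B := by
  refine hAB.antisymm fun m hmB => ?_
  by_contra hmA
  have hle : ∀ n, 0 ≤ defect B n - defect A n := fun n => by
    have := @hAB n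
    simp only [defect]
    split_ifs <;> tauto
  have := single_le_finsum m (hB.sub hA) hle
  simp only [Pi.sub_apply] at this
  rw [finsum_sub_distrib hB hA, ← charge, ← charge, h, sub_self] at this
  simp [defect, hmB, hmA] at this

lemma exists_bound {Z : Set ℤ} (hZ : (defect Z).HasFiniteSupport) :
    ∃ N : ℕ, ∀ m : ℤ, (m < -N → m ∈ Z) ∧ (N ≤ m → m ∉ Z) := by
  obtain ⟨N, hN⟩ := (hZ.image Int.natAbs).bddAbove
  have key : ∀ m, m ∈ support (defect Z) → m.natAbs ≤ N := fun m hm => hN ⟨m, hm, rfl⟩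
  refine ⟨N + 1, fun m => ⟨fun hm => ?_, fun hm hmZ => ?_⟩⟩
  · by_contra hmZ
    have := key m (by simp [defect, hmZ]; omega)
    omega
  · have := key m (by simp [defect, hmZ]; omega)
    omega

lemma eq_Iio_charge {S : Set ℤ} (hS : (defect S).HasFiniteSupport)
    (h : ∀ j ∈ S, j - 1 ∈ S) : S = Set.Iio (charge S) := by
  obtain ⟨N, hN⟩ := exists_bound hS
  obtain ⟨M, hMS, hM⟩ := Int.exists_greatest_of_bdd
    ⟨N, fun z hz => by by_contra hzN; exact (hN z).2 (by omega) hz⟩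
    ⟨-N - 1, (hN _).1 (by omega)⟩
  have hsub : ∀ n : ℕ, M - n ∈ S := fun n => by
    induction n with
    | zero => simpa using hMS
    | succ n ih => simpa [sub_sub] using h _ ih
  have hS' : S = Set.Iio (M + 1) := Set.ext fun z =>
    ⟨fun hz => Int.lt_add_one_of_le (hM z hz), fun hz => by
      have := hsub (M - z).toNat
      rwa [Int.toNat_of_nonneg (by simp at hz; omega), sub_sub_cancel] at this⟩
  rw [hS', charge_Iio]

def shift (d : ℤ) (Z : Set ℤ) : Set ℤ := {m | m + d ∈ Z}

lemma defect_shift (d : ℤ) (Z : Set ℤ) (m : ℤ) :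
    defect (shift d Z) m = defect Z (m + d) + defect (Set.Iio (-d)) m := by
  simp only [defect, shift, Set.mem_ofPred_eq, Set.mem_Iio]
  split_ifs <;> simp_all <;> omega

lemma finsum_mul_defect_shift {d : ℤ} {Z : Set ℤ} (hZ : (defect Z).HasFiniteSupport)
    (g : ℤ → ℤ) :
    ∑ᶠ m, g m * defect (shift d Z) m =
      ∑ᶠ m, g (m - d) * defect Z m + ∑ᶠ m, g m * defect (Set.Iio (-d)) m := by
  simp only [defect_shift, mul_add]
  rw [finsum_add_distrib, ← finsum_comp_equiv (Equiv.subRight d)]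
  · simp
  · exact HasFiniteSupport.mul_right g (hZ.comp_of_injective (add_left_injective d))
  · exact HasFiniteSupport.mul_right g (hasFiniteSupport_defect_Iio _)

lemma hasFiniteSupport_defect_shift {Z : Set ℤ} (hZ : (defect Z).HasFiniteSupport) (d : ℤ) :
    (defect (shift d Z)).HasFiniteSupport := by
  rw [show defect (shift d Z) = (defect Z ∘ (· + d)) + defect (Set.Iio (-d)) from
    funext (defect_shift d Z)]
  exact (hZ.comp_of_injective (add_left_injective d)).add (hasFiniteSupport_defect_Iio (-d))

lemma charge_shift {Z : Set ℤ} (hZ : (defect Z).HasFiniteSupport) (d : ℤ) :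
    charge (shift d Z) = charge Z - d := by
  have h := finsum_mul_defect_shift (d := d) hZ fun _ => 1
  simp only [one_mul] at h
  rw [charge, h, ← charge, ← charge, charge_Iio]
  ring

lemma energy_shift {Z : Set ℤ} (hZ : (defect Z).HasFiniteSupport) (d : ℤ) :
    energy (shift d Z) = energy Z - d * charge Z + energy (Set.Iio (-d)) := by
  rw [energy, finsum_mul_defect_shift hZ fun m => m]
  simp only [sub_mul]
  rw [finsum_sub_distrib, ← mul_finsum, ← energy, ← charge, ← energy] <;> fun_prop

@[simp] lemma shift_zero (Z : Set ℤ) : shift 0 Z = Z := by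
  ext m; simp [shift]

lemma shift_shift (d e : ℤ) (Z : Set ℤ) : shift d (shift e Z) = shift (d + e) Z := by
  ext m; simp [shift, add_assoc]

lemma shift_neg_shift (d : ℤ) (Z : Set ℤ) : shift (-d) (shift d Z) = Z := by
  rw [shift_shift, neg_add_cancel, shift_zero]

def conj (Z : Set ℤ) : Set ℤ := {m | -1 - m ∉ Z}

lemma defect_conj (Z : Set ℤ) (m : ℤ) : defect (conj Z) m = -defect Z (-1 - m) := by
  simp only [defect, conj, Set.mem_ofPred_eq]
  split_ifs <;> simp_all <;> omega

lemma hasFiniteSupport_defect_conj {Z : Set ℤ} (hZ : (defect Z).HasFiniteSupport) :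
    (defect (conj Z)).HasFiniteSupport := by
  rw [show defect (conj Z) = -(defect Z ∘ (-1 - ·)) from funext (defect_conj Z)]
  exact (hZ.comp_of_injective sub_right_injective).neg

lemma charge_conj (Z : Set ℤ) : charge (conj Z) = -charge Z := by
  simp only [charge, defect_conj, finsum_neg_distrib]
  exact congrArg _ (finsum_comp_equiv (Equiv.subLeft (-1)))

lemma conj_shift (d : ℤ) (Z : Set ℤ) : conj (shift d Z) = shift (-d) (conj Z) := by
  ext m; simp only [conj, shift, Set.mem_ofPred_eq]; ring_nf

lemma conj_Iio (c : ℤ) : conj (Set.Iio c) = Set.Iio (-c) := by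
  ext m; simp only [conj, Set.mem_ofPred_eq, Set.mem_Iio]; omega

/-! ### Residues mod `t` -/

def residue (t k : ℕ) (Z : Set ℤ) : Set ℤ := {j | t * j + k ∈ Z}

def glue (t : ℕ) (S : ℕ → Set ℤ) : Set ℤ := {m | m / t ∈ S (m % t).toNat}

section

variable {t k : ℕ} {Z : Set ℤ}

lemma mul_add_neg_iff (hk : k < t) (j : ℤ) : (t : ℤ) * j + k < 0 ↔ j < 0 := by
  constructor
  · intro h
    by_contra hj
    have := mul_nonneg (Nat.cast_nonneg t) (not_lt.1 hj)
    omega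
  · intro hj
    have : (t : ℤ) * j ≤ t * (-1) := mul_le_mul_of_nonneg_left (by omega) (Nat.cast_nonneg t)
    omega

lemma mul_add_injective (ht : 0 < t) (k : ℤ) : Injective fun j : ℤ => t * j + k :=
  fun _ _ h => mul_left_cancel₀ (by positivity) (add_right_cancel h)

lemma mul_add_ne_zero (hk0 : 0 < k) (hkt : k < t) (j : ℤ) : (t : ℤ) * j + k ≠ 0 := by
  have := mul_add_neg_iff hkt j
  rcases lt_or_ge j 0 with hj | hj
  · omega
  · have := mul_nonneg (Nat.cast_nonneg t) hj
    omega

lemma exists_eq_mul_add (ht : 0 < t) (m : ℤ) : ∃ j : ℤ, ∃ k < t, m = t * j + k := by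
  have h0 := Int.emod_nonneg m (by positivity : (t : ℤ) ≠ 0)
  have h1 := Int.emod_lt_of_pos m (by positivity : (0 : ℤ) < t)
  refine ⟨m / t, (m % t).toNat, by omega, ?_⟩
  rw [Int.toNat_of_nonneg h0, Int.mul_ediv_add_emod]

lemma ext_residue (ht : 0 < t) {A B : Set ℤ} (h : ∀ k < t, residue t k A = residue t k B) :
    A = B := by
  ext m
  obtain ⟨j, k, hk, rfl⟩ := exists_eq_mul_add ht m
  exact Set.ext_iff.1 (h k hk) j

lemma residue_glue (hk : k < t) (S : ℕ → Set ℤ) : residue t k (glue t S) = S k := by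
  have ht : (t : ℤ) ≠ 0 := by omega
  ext j
  simp only [residue, glue, Set.mem_ofPred_eq]
  rw [add_comm, Int.add_mul_ediv_left _ _ ht, Int.add_mul_emod_self_left,
    Int.ediv_eq_zero_of_lt (by positivity) (by omega),
    Int.emod_eq_of_lt (by positivity) (by omega), zero_add, Int.toNat_natCast]

lemma defect_residue (hk : k < t) (Z : Set ℤ) (j : ℤ) :
    defect (residue t k Z) j = defect Z (t * j + k) := by
  simp only [defect, residue, Set.mem_ofPred_eq, mul_add_neg_iff hk]
  split_ifs <;> simp_all

lemma hasFiniteSupport_defect_residue (hk : k < t) (hZ : (defect Z).HasFiniteSupport) :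
    (defect (residue t k Z)).HasFiniteSupport := by
  rw [show defect (residue t k Z) = defect Z ∘ (fun j : ℤ => t * j + k) from
    funext (defect_residue hk Z)]
  exact hZ.comp_of_injective (mul_add_injective (by omega) k)

lemma hasFiniteSupport_defect_glue (ht : 0 < t) {S : ℕ → Set ℤ}
    (hS : ∀ k < t, (defect (S k)).HasFiniteSupport) : (defect (glue t S)).HasFiniteSupport := by
  refine ((Finset.range t).finite_toSet.biUnion fun k hk =>
    (hS k (Finset.mem_range.1 hk)).image fun j : ℤ => t * j + k).subset fun m hm => ?_
  obtain ⟨j, k, hk, rfl⟩ := exists_eq_mul_add ht m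
  simp only [Set.mem_iUnion, Set.mem_image]
  refine ⟨k, Finset.mem_range.2 hk, j, ?_, rfl⟩
  rwa [mem_support, ← residue_glue hk S, defect_residue hk]

lemma finsum_eq_sum_residue {M : Type*} [AddCommMonoid M] (ht : 0 < t) {F : ℤ → M}
    (hF : F.HasFiniteSupport) :
    ∑ᶠ m, F m = ∑ k ∈ Finset.range t, ∑ᶠ j : ℤ, F (t * j + k) := by
  have : NeZero t := ⟨ht.ne'⟩
  rw [← finsum_comp_equiv (Int.divModEquiv t).symm,
    finsum_curry (fun p => F ((Int.divModEquiv t).symm p))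
      (hF.comp_of_injective (Int.divModEquiv t).symm.injective)]
  simp only [Int.divModEquiv_symm_apply, finsum_eq_sum_of_fintype]
  rw [finsum_sum_comm, ← Fin.sum_univ_eq_sum_range (fun k => ∑ᶠ j : ℤ, F (t * j + k))]
  · simp only [mul_comm]
  · intro k _
    exact hF.comp_of_injective (by simpa only [mul_comm] using mul_add_injective ht (k : ℤ))

lemma charge_eq_sum_residue (ht : 0 < t) (hZ : (defect Z).HasFiniteSupport) :
    charge Z = ∑ k ∈ Finset.range t, charge (residue t k Z) := by
  rw [charge, finsum_eq_sum_residue ht hZ]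
  refine Finset.sum_congr rfl fun k hk => ?_
  simp only [charge, defect_residue (Finset.mem_range.1 hk)]

lemma energy_eq_sum_residue (ht : 0 < t) (hZ : (defect Z).HasFiniteSupport) :
    energy Z = ∑ k ∈ Finset.range t,
      (t * energy (residue t k Z) + k * charge (residue t k Z)) := by
  rw [energy, finsum_eq_sum_residue ht (F := fun m => m * defect Z m)
    (HasFiniteSupport.mul_right _ hZ)]
  refine Finset.sum_congr rfl fun k hk => ?_
  have hR := hasFiniteSupport_defect_residue (Finset.mem_range.1 hk) hZ
  simp only [energy, charge, ← defect_residue (Finset.mem_range.1 hk), add_mul, mul_assoc]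
  rw [finsum_add_distrib, mul_finsum, mul_finsum] <;> fun_prop

end

/-! ### Core and quotient -/

noncomputable def quotient (t : ℕ) (Z : Set ℤ) (k : ℕ) : Set ℤ :=
  shift (charge (residue t k Z)) (residue t k Z)

noncomputable def core (t : ℕ) (Z : Set ℤ) : Set ℤ :=
  glue t fun k => Set.Iio (charge (residue t k Z))

section

variable {t k : ℕ} {Z : Set ℤ}

lemma residue_core (hk : k < t) : residue t k (core t Z) = Set.Iio (charge (residue t k Z)) :=
  residue_glue hk _

lemma residue_eq_shift_quotient :
    residue t k Z = shift (-charge (residue t k Z)) (quotient t Z k) :=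
  (shift_neg_shift _ _).symm

lemma hasFiniteSupport_defect_quotient (hk : k < t) (hZ : (defect Z).HasFiniteSupport) :
    (defect (quotient t Z k)).HasFiniteSupport :=
  hasFiniteSupport_defect_shift (hasFiniteSupport_defect_residue hk hZ) _

lemma charge_quotient (hk : k < t) (hZ : (defect Z).HasFiniteSupport) :
    charge (quotient t Z k) = 0 := by
  rw [quotient, charge_shift (hasFiniteSupport_defect_residue hk hZ), sub_self]

lemma hasFiniteSupport_defect_core (ht : 0 < t) : (defect (core t Z)).HasFiniteSupport :=
  hasFiniteSupport_defect_glue ht fun _ _ => hasFiniteSupport_defect_Iio _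

lemma charge_core (ht : 0 < t) (hZ : (defect Z).HasFiniteSupport) :
    charge (core t Z) = charge Z := by
  rw [charge_eq_sum_residue ht (hasFiniteSupport_defect_core ht), charge_eq_sum_residue ht hZ]
  refine Finset.sum_congr rfl fun k hk => ?_
  rw [residue_core (Finset.mem_range.1 hk), charge_Iio]

lemma energy_residue (hk : k < t) (hZ : (defect Z).HasFiniteSupport) :
    energy (residue t k Z) =
      energy (quotient t Z k) + energy (Set.Iio (charge (residue t k Z))) := by
  conv_lhs => rw [residue_eq_shift_quotient]
  rw [energy_shift (hasFiniteSupport_defect_quotient hk hZ), charge_quotient hk hZ, neg_neg]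
  ring

lemma energy_eq_energy_core_add (ht : 0 < t) (hZ : (defect Z).HasFiniteSupport) :
    energy Z = energy (core t Z) + t * ∑ k ∈ Finset.range t, energy (quotient t Z k) := by
  rw [energy_eq_sum_residue ht hZ, energy_eq_sum_residue ht (hasFiniteSupport_defect_core ht),
    Finset.mul_sum, ← Finset.sum_add_distrib]
  refine Finset.sum_congr rfl fun k hk => ?_
  rw [residue_core (Finset.mem_range.1 hk), charge_Iio,
    energy_residue (Finset.mem_range.1 hk) hZ]
  ring

lemma eq_of_core_eq_of_quotient_eq (ht : 0 < t) {Z W : Set ℤ} (hcore : core t Z = core t W)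
    (hquot : ∀ k < t, quotient t Z k = quotient t W k) : Z = W := by
  refine ext_residue ht fun k hk => ?_
  have hc : charge (residue t k Z) = charge (residue t k W) := by
    rw [← charge_Iio (charge (residue t k Z)), ← residue_core hk, hcore, residue_core hk,
      charge_Iio]
  rw [residue_eq_shift_quotient, residue_eq_shift_quotient (Z := W), hc, hquot k hk]

def IsCore (t : ℕ) (Z : Set ℤ) : Prop := ∀ m ∈ Z, m - t ∈ Z

lemma isCore_core (ht : 0 < t) : IsCore t (core t Z) := by
  intro m hm
  obtain ⟨j, k, hk, rfl⟩ := exists_eq_mul_add ht m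
  have hm' : j ∈ residue t k (core t Z) := hm
  have : j - 1 ∈ residue t k (core t Z) := by
    rw [residue_core hk] at hm' ⊢
    exact Set.mem_Iio.2 ((sub_one_lt j).trans hm')
  simpa [residue, mul_sub, sub_add_eq_add_sub] using this

lemma core_eq_self (ht : 0 < t) (hZ : (defect Z).HasFiniteSupport) (hcore : IsCore t Z) :
    core t Z = Z := by
  refine ext_residue ht fun k hk => ?_
  rw [residue_core hk, ← eq_Iio_charge (hasFiniteSupport_defect_residue hk hZ)]
  intro j hj
  simpa [residue, mul_sub, sub_add_eq_add_sub] using hcore _ hj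

lemma IsCore.sub_mul_mem (h : IsCore t Z) {m : ℤ} (hm : m ∈ Z) (n : ℕ) :
    m - t * n ∈ Z := by
  induction n with
  | zero => simpa
  | succ n ih => simpa [mul_add, sub_add_eq_sub_sub] using h _ ih

end

noncomputable def ofCoreQuotient (t : ℕ) (C : Set ℤ) (Q : ℕ → Set ℤ) : Set ℤ :=
  glue t fun k => shift (-charge (residue t k C)) (Q k)

section

variable {t : ℕ} {C : Set ℤ} {Q : ℕ → Set ℤ}

lemma charge_residue_ofCoreQuotient {k : ℕ} (hk : k < t) (hQ : (defect (Q k)).HasFiniteSupport)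
    (hQc : charge (Q k) = 0) :
    charge (residue t k (ofCoreQuotient t C Q)) = charge (residue t k C) := by
  rw [ofCoreQuotient, residue_glue hk, charge_shift hQ, hQc, zero_sub, neg_neg]

lemma hasFiniteSupport_defect_ofCoreQuotient (ht : 0 < t)
    (hQ : ∀ k < t, (defect (Q k)).HasFiniteSupport) :
    (defect (ofCoreQuotient t C Q)).HasFiniteSupport :=
  hasFiniteSupport_defect_glue ht fun k hk => hasFiniteSupport_defect_shift (hQ k hk) _

lemma charge_ofCoreQuotient (ht : 0 < t) (hC : (defect C).HasFiniteSupport)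
    (hQ : ∀ k < t, (defect (Q k)).HasFiniteSupport) (hQc : ∀ k < t, charge (Q k) = 0) :
    charge (ofCoreQuotient t C Q) = charge C := by
  rw [charge_eq_sum_residue ht (hasFiniteSupport_defect_ofCoreQuotient ht hQ),
    charge_eq_sum_residue ht hC]
  refine Finset.sum_congr rfl fun k hk => ?_
  have hk := Finset.mem_range.1 hk
  exact charge_residue_ofCoreQuotient hk (hQ k hk) (hQc k hk)

lemma core_ofCoreQuotient (ht : 0 < t) (hC : (defect C).HasFiniteSupport) (hcore : IsCore t C)
    (hQ : ∀ k < t, (defect (Q k)).HasFiniteSupport) (hQc : ∀ k < t, charge (Q k) = 0) :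
    core t (ofCoreQuotient t C Q) = C := by
  conv_rhs => rw [← core_eq_self ht hC hcore]
  refine ext_residue ht fun k hk => ?_
  rw [residue_core hk, residue_core hk, charge_residue_ofCoreQuotient hk (hQ k hk) (hQc k hk)]

lemma quotient_ofCoreQuotient {k : ℕ} (hk : k < t) (hQ : (defect (Q k)).HasFiniteSupport)
    (hQc : charge (Q k) = 0) : quotient t (ofCoreQuotient t C Q) k = Q k := by
  rw [quotient, charge_residue_ofCoreQuotient hk hQ hQc, ofCoreQuotient, residue_glue hk,
    shift_shift, add_neg_cancel, shift_zero]

end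

/-! ### Doubled distinct beta-sets -/

def IsDoubledDistinct (Z : Set ℤ) : Prop := ∀ m, m ∈ Z ↔ m ≠ 0 ∧ -m ∉ Z

lemma IsDoubledDistinct.charge_eq_zero {Z : Set ℤ} (h : IsDoubledDistinct Z) : charge Z = 0 := by
  have hodd : ∀ m, defect Z (-m) = -defect Z m := fun m => by
    have h1 := h m
    have h2 := h (-m)
    simp only [neg_neg] at h2
    simp only [defect]
    split_ifs <;> simp_all <;> omega
  have : charge Z = -charge Z := by
    conv_lhs => rw [charge, ← finsum_comp_equiv (Equiv.neg ℤ)]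
    simp [hodd, finsum_neg_distrib, charge]
  omega

lemma isDoubledDistinct_Iio_iff (c : ℤ) : IsDoubledDistinct (Set.Iio c) ↔ c = 0 := by
  refine ⟨fun h => by simpa [charge_Iio] using h.charge_eq_zero, fun hc m => ?_⟩
  subst hc
  simp only [Set.mem_Iio]
  omega

lemma isDoubledDistinct_iff_nonneg {Z : Set ℤ} :
    IsDoubledDistinct Z ↔ ∀ m, (0 ≤ m ∧ m ∈ Z ↔ 0 ≤ m - 1 ∧ -m ∉ Z) := by
  constructor
  · intro h m
    rw [h m]
    rcases lt_trichotomy m 0 with hm | rfl | hm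
    · simp only [not_le.2 hm, false_and, show ¬ (0 : ℤ) ≤ m - 1 by omega]
    · simp
    · simp only [hm.le, hm.ne', ne_eq, not_false_eq_true, true_and,
        show (0 : ℤ) ≤ m - 1 by omega]
  · intro h m
    rcases lt_trichotomy m 0 with hm | rfl | hm
    · have := h (-m)
      simp only [neg_neg, show (0 : ℤ) ≤ -m by omega, show (0 : ℤ) ≤ -m - 1 by omega,
        true_and] at this
      simp only [hm.ne, ne_eq, not_false_eq_true, true_and]
      tauto
    · simpa using h 0
    · have := h m
      simp only [hm.le, true_and, show (0 : ℤ) ≤ m - 1 by omega] at this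
      simpa [hm.ne'] using this

lemma isDoubledDistinct_iff_residue {t : ℕ} (ht : 0 < t) {Z : Set ℤ} :
    IsDoubledDistinct Z ↔ IsDoubledDistinct (residue t 0 Z) ∧
      ∀ k, 0 < k → k < t → residue t (t - k) Z = conj (residue t k Z) := by
  have hres : ∀ j : ℤ, j ∈ residue t 0 Z ↔ (t : ℤ) * j ∈ Z := by simp [residue]
  constructor
  · intro h
    refine ⟨fun j => ?_, fun k hk0 hkt => Set.ext fun j => ?_⟩
    · rw [hres, hres, h, mul_neg]
      simp [ht.ne']
    · have e : (t : ℤ) * j + ((t - k : ℕ) : ℤ) = -((t : ℤ) * (-1 - j) + k) := by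
        push_cast [hkt.le]
        ring
      simp only [residue, conj, Set.mem_ofPred_eq]
      rw [e, h, neg_neg, neg_ne_zero]
      simp [mul_add_ne_zero hk0 hkt]
  · rintro ⟨h0, hk⟩ m
    obtain ⟨j, k, hkt, rfl⟩ := exists_eq_mul_add ht m
    rcases Nat.eq_zero_or_pos k with rfl | hk0
    · have := h0 j
      rw [hres, hres, mul_neg] at this
      simpa [ht.ne'] using this
    · have := Set.ext_iff.1 (hk k hk0 hkt) (-1 - j)
      simp only [residue, conj, Set.mem_ofPred_eq, sub_sub_cancel] at this
      have e : -((t : ℤ) * j + k) = t * (-1 - j) + ((t - k : ℕ) : ℤ) := by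
        push_cast [hkt.le]
        ring
      rw [e, this, not_not]
      simp [mul_add_ne_zero hk0 hkt]

lemma isDoubledDistinct_core_iff {t : ℕ} (ht : 0 < t) {Z : Set ℤ} :
    IsDoubledDistinct (core t Z) ↔ charge (residue t 0 Z) = 0 ∧
      ∀ k, 0 < k → k < t → charge (residue t (t - k) Z) = -charge (residue t k Z) := by
  rw [isDoubledDistinct_iff_residue ht, residue_core ht, isDoubledDistinct_Iio_iff]
  refine and_congr_right fun _ => forall_congr' fun k =>
    imp_congr_right fun _ => imp_congr_right fun hkt => ?_
  rw [residue_core hkt, residue_core (by omega), conj_Iio, Set.Iio_inj]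

lemma isDoubledDistinct_iff_core_quotient {t : ℕ} (ht : 0 < t) {Z : Set ℤ} :
    IsDoubledDistinct Z ↔ IsDoubledDistinct (core t Z) ∧ IsDoubledDistinct (quotient t Z 0) ∧
      ∀ k, 0 < k → k < t → quotient t Z (t - k) = conj (quotient t Z k) := by
  rw [isDoubledDistinct_iff_residue ht, isDoubledDistinct_core_iff ht]
  constructor
  · rintro ⟨h0, hk⟩
    have hc0 : charge (residue t 0 Z) = 0 := h0.charge_eq_zero
    have hck : ∀ k, 0 < k → k < t →
        charge (residue t (t - k) Z) = -charge (residue t k Z) := fun k hk0 hkt => by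
      rw [hk k hk0 hkt, charge_conj]
    refine ⟨⟨hc0, hck⟩, by rwa [quotient, hc0, shift_zero], fun k hk0 hkt => ?_⟩
    rw [quotient, quotient, hck k hk0 hkt, hk k hk0 hkt, conj_shift]
  · rintro ⟨⟨hc0, hck⟩, h0, hk⟩
    refine ⟨by rwa [quotient, hc0, shift_zero] at h0, fun k hk0 hkt => ?_⟩
    rw [residue_eq_shift_quotient (k := t - k), residue_eq_shift_quotient (k := k), hk k hk0 hkt,
      hck k hk0 hkt, conj_shift]

/-! ### Beta-sets as ranges of decreasing sequences -/

section

variable {b : ℕ → ℤ} {K : ℕ}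

lemma defect_range (hb : StrictAnti b) (hK : ∀ i, K ≤ i → b i = -i - 1) (m : ℤ) :
    defect (Set.range b) m =
      (if m ∈ (Finset.range K).image b then 1 else 0) -
        (if m ∈ (Finset.range K).image fun i : ℕ => -(i : ℤ) - 1 then 1 else 0) := by
  have hlow : ∀ i < K, -(K : ℤ) ≤ b i := fun i hi => by
    have := hb hi
    rw [hK K le_rfl] at this
    omega
  have hmem : m ∈ Set.range b ↔ m ∈ (Finset.range K).image b ∨ m < -K := by
    constructor
    · rintro ⟨i, rfl⟩
      by_cases hi : i < K
      · exact Or.inl (Finset.mem_image_of_mem b (Finset.mem_range.2 hi))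
      · rw [hK i (by omega)]
        omega
    · rintro (h | h)
      · obtain ⟨i, -, rfl⟩ := Finset.mem_image.1 h
        exact ⟨i, rfl⟩
      · exact ⟨(-m - 1).toNat, by rw [hK _ (by omega)]; omega⟩
  have hvac :
      (m ∈ (Finset.range K).image fun i : ℕ => -(i : ℤ) - 1) ↔ -(K : ℤ) ≤ m ∧ m < 0 := by
    simp only [Finset.mem_image, Finset.mem_range]
    exact ⟨fun ⟨i, hi, h⟩ => by omega, fun h => ⟨(-m - 1).toNat, by omega, by omega⟩⟩
  have himg : m ∈ (Finset.range K).image b → -(K : ℤ) ≤ m := fun h => by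
    obtain ⟨i, hi, rfl⟩ := Finset.mem_image.1 h
    exact hlow i (Finset.mem_range.1 hi)
  simp only [defect, hmem, hvac]
  split_ifs <;> simp_all <;> omega

lemma support_defect_range_subset (hb : StrictAnti b) (hK : ∀ i, K ≤ i → b i = -i - 1) :
    support (defect (Set.range b)) ⊆
      ↑((Finset.range K).image b ∪ (Finset.range K).image fun i : ℕ => -(i : ℤ) - 1) :=
  fun m hm => by
    rw [mem_support, defect_range hb hK] at hm
    simp only [Finset.coe_union, Set.mem_union, Finset.mem_coe]
    split_ifs at hm <;> simp_all

lemma hasFiniteSupport_defect_range (hb : StrictAnti b) (hK : ∀ i, K ≤ i → b i = -i - 1) :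
    (defect (Set.range b)).HasFiniteSupport :=
  (Finset.finite_toSet _).subset (support_defect_range_subset hb hK)

lemma finsum_mul_defect_range (hb : StrictAnti b) (hK : ∀ i, K ≤ i → b i = -i - 1)
    (g : ℤ → ℤ) :
    ∑ᶠ m, g m * defect (Set.range b) m = ∑ i ∈ Finset.range K, (g (b i) - g (-i - 1)) := by
  rw [finsum_eq_sum_of_support_subset _
    ((support_mul_subset_right _ _).trans (support_defect_range_subset hb hK))]
  simp only [defect_range hb hK, mul_sub, mul_ite, mul_one, mul_zero, Finset.sum_sub_distrib,
    Finset.sum_ite_mem, Finset.union_inter_cancel_left, Finset.union_inter_cancel_right]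
  rw [Finset.sum_image hb.injective.injOn, Finset.sum_image fun i _ j _ h => by simpa using h]

lemma charge_range (hb : StrictAnti b) (hK : ∀ i, K ≤ i → b i = -i - 1) :
    charge (Set.range b) = 0 := by
  simpa [charge] using finsum_mul_defect_range hb hK fun _ => 1

lemma energy_range (hb : StrictAnti b) (hK : ∀ i, K ≤ i → b i = -i - 1) :
    energy (Set.range b) = ∑ i ∈ Finset.range K, (b i + i + 1) := by
  rw [energy, finsum_mul_defect_range hb hK fun m => m]
  exact Finset.sum_congr rfl fun _ _ => by ring

lemma exists_strictAnti_range_eq {Z : Set ℤ} (hZ : (defect Z).HasFiniteSupport) :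
    ∃ b : ℕ → ℤ, StrictAnti b ∧ Set.range b = Z := by
  obtain ⟨N, hN⟩ := exists_bound hZ
  let S : ℕ → Prop := fun n => (N : ℤ) - n ∈ Z
  have hS : (Set.ofPred S).Infinite :=
    (Set.Ioi_infinite (2 * N)).mono fun n hn => (hN _).1 (by simp at hn; omega)
  refine ⟨fun i => N - Nat.nth S i, fun i j hij => by simpa using Nat.nth_strictMono hS hij,
    Set.ext fun m => ⟨?_, fun hm => ?_⟩⟩
  · rintro ⟨i, rfl⟩
    exact Nat.nth_mem_of_infinite hS i
  · have hmN : m < N := by by_contra h; exact (hN m).2 (by omega) hm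
    obtain ⟨i, hi⟩ : (N - m).toNat ∈ Set.range (Nat.nth S) := by
      rw [Nat.range_nth_of_infinite hS]
      show (N : ℤ) - ((N - m).toNat : ℕ) ∈ Z
      rwa [Int.toNat_of_nonneg (by omega), sub_sub_cancel]
    exact ⟨i, by simp only [hi]; omega⟩

lemma exists_eq_sub_of_strictAnti (hb : StrictAnti b) {a : ℤ} (ha : Set.Iio a ⊆ Set.range b) :
    ∃ c : ℤ, ∃ K : ℕ, ∀ i, K ≤ i → b i = c - i := by
  set K := (b 0 - a + 1).toNat
  have hK : b K < a := by have := hb.apply_add_le_sub 0 K; simp only [zero_add] at this; omega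
  have hstep : ∀ i, K ≤ i → b (i + 1) = b i - 1 := fun i hi => by
    obtain ⟨j, hj⟩ := ha (show b i - 1 < a from by have := hb.antitone hi; omega)
    have hij : i < j := hb.lt_iff_gt.1 (by omega)
    have := hb.antitone (show i + 1 ≤ j from hij)
    have := hb (show i < i + 1 by omega)
    omega
  refine ⟨b K + K, K, fun i hi => ?_⟩
  obtain ⟨n, rfl⟩ := Nat.exists_eq_add_of_le hi
  induction n with
  | zero => simp
  | succ n ih =>
    rw [← add_assoc, hstep _ (by omega), ih (by omega)]
    push_cast
    ring

lemma exists_strictAnti_range_eq_of_charge_eq_zero {Z : Set ℤ}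
    (hZ : (defect Z).HasFiniteSupport) (hc : charge Z = 0) :
    ∃ b : ℕ → ℤ, StrictAnti b ∧ Set.range b = Z ∧
      ∃ K : ℕ, ∀ i, K ≤ i → b i = -i - 1 := by
  obtain ⟨b, hb, rfl⟩ := exists_strictAnti_range_eq hZ
  obtain ⟨N, hN⟩ := exists_bound hZ
  obtain ⟨c, K, hK⟩ := exists_eq_sub_of_strictAnti hb (a := -N) fun m hm => (hN m).1 hm
  have hb' : StrictAnti fun i => b i - (c + 1) := fun i j hij => by simpa using hb hij
  have hK' : ∀ i, K ≤ i → b i - (c + 1) = -i - 1 := fun i hi => by rw [hK i hi]; ring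
  have hrange : Set.range (fun i => b i - (c + 1)) = shift (c + 1) (Set.range b) := by
    ext m
    simp only [Set.mem_range, shift, Set.mem_ofPred_eq]
    exact exists_congr fun i => by omega
  -- `b` ends like the vacuum shifted by `c + 1`, so `c + 1` is the charge of `Z`.
  have := charge_range hb' hK'
  rw [hrange, charge_shift hZ, hc] at this
  exact ⟨b, hb, rfl, K, fun i hi => by rw [hK i hi]; omega⟩

end

end BetaSet

/-! ### Partitions -/

namespace IntPartition

open BetaSet Function

def beta (p : IntPartition) (i : ℕ) : ℤ := p.parts i - i - 1

def betaSet (p : IntPartition) : Set ℤ := {m | zeroPos p m}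

lemma betaSet_eq_range (p : IntPartition) : p.betaSet = Set.range p.beta := rfl

lemma beta_strictAnti (p : IntPartition) : StrictAnti p.beta := fun i j hij => by
  have := p.antitone hij.le
  simp only [beta]
  omega

lemma exists_parts_eq_zero (p : IntPartition) : ∃ K, ∀ i, K ≤ i → p.parts i = 0 := by
  obtain ⟨K, hK⟩ := p.finite_support.bddAbove
  exact ⟨K + 1, fun i hi => by_contra fun h => absurd (hK h) (by omega)⟩

lemma exists_beta_eq (p : IntPartition) : ∃ K, ∀ i, K ≤ i → p.beta i = -i - 1 := by
  obtain ⟨K, hK⟩ := p.exists_parts_eq_zero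
  exact ⟨K, fun i hi => by simp [beta, hK i hi]⟩

lemma hasFiniteSupport_defect_betaSet (p : IntPartition) :
    (defect p.betaSet).HasFiniteSupport := by
  obtain ⟨K, hK⟩ := p.exists_beta_eq
  exact hasFiniteSupport_defect_range p.beta_strictAnti hK

lemma charge_betaSet (p : IntPartition) : charge p.betaSet = 0 := by
  obtain ⟨K, hK⟩ := p.exists_beta_eq
  exact charge_range p.beta_strictAnti hK

lemma energy_betaSet (p : IntPartition) : energy p.betaSet = p.weight := by
  obtain ⟨K, hK⟩ := p.exists_parts_eq_zero
  have hw : p.weight = ∑ i ∈ Finset.range K, p.parts i :=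
    Finset.sum_subset (fun i hi => by
      simp only [Set.Finite.mem_toFinset, mem_support] at hi
      simp only [Finset.mem_range]
      by_contra h
      exact hi (hK i (by omega))) fun i _ hi => by simpa using hi
  rw [betaSet_eq_range, energy_range p.beta_strictAnti fun i hi => by simp [beta, hK i hi], hw]
  push_cast
  exact Finset.sum_congr rfl fun i _ => by simp only [beta]; ring

lemma betaSet_injective : Injective betaSet := by
  rintro ⟨p, hp, hp'⟩ ⟨q, hq, hq'⟩ h
  have hneg : ∀ r : IntPartition, StrictMono (Neg.neg ∘ r.beta) := fun r =>
    fun i j hij => neg_lt_neg (r.beta_strictAnti hij)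
  have := (StrictMono.range_inj (hneg ⟨p, hp, hp'⟩) (hneg ⟨q, hq, hq'⟩)).1 (by
    simp only [Set.range_comp]
    exact congrArg _ h)
  simp only [mk.injEq]
  funext i
  have := congrFun this i
  simp only [comp_apply, neg_inj, beta] at this
  omega

instance : Nonempty IntPartition := ⟨⟨0, antitone_const, by simp⟩⟩

lemma exists_betaSet_eq {Z : Set ℤ} (hZ : (defect Z).HasFiniteSupport) (hc : charge Z = 0) :
    ∃ p : IntPartition, p.betaSet = Z := by
  obtain ⟨b, hb, rfl, K, hK⟩ := exists_strictAnti_range_eq_of_charge_eq_zero hZ hc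
  have hnonneg : ∀ i, 0 ≤ b i + i + 1 := fun i => by
    rcases le_total K i with hi | hi
    · rw [hK i hi]
      omega
    · obtain ⟨n, rfl⟩ := Nat.exists_eq_add_of_le hi
      have := hb.apply_add_le_sub i n
      rw [hK _ le_rfl] at this
      push_cast at this
      omega
  refine ⟨⟨fun i => (b i + i + 1).toNat, antitone_nat_of_succ_le fun i => ?_, ?_⟩, ?_⟩
  · have := hb (show i < i + 1 by omega)
    push_cast
    omega
  · refine (Set.finite_Iio K).subset fun i hi => ?_
    by_contra h
    simp only [mem_support, hK i (not_lt.1 h)] at hi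
    omega
  · rw [betaSet_eq_range]
    congr 1
    funext i
    simp only [beta]
    rw [Int.toNat_of_nonneg (hnonneg i)]
    ring

lemma betaSet_invFun {Z : Set ℤ} (hZ : (defect Z).HasFiniteSupport) (hc : charge Z = 0) :
    (invFun betaSet Z).betaSet = Z :=
  invFun_eq (exists_betaSet_eq hZ hc)

lemma lt_conj_iff (p : IntPartition) (i j : ℕ) : i < p.conj j ↔ j < p.parts i :=
  (Set.mem_iff_lt_ncard_of_isLowerSet (p.conj_set_finite j)
    (fun _ _ hba ha => lt_of_lt_of_le ha (p.antitone hba)) i).symm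

lemma lt_durfee_iff (p : IntPartition) (i : ℕ) : i < p.durfee ↔ i < p.parts i :=
  (Set.mem_iff_lt_ncard_of_isLowerSet
    (p.finite_support.subset fun i (hi : i < p.parts i) => by simp only [mem_support]; omega)
    (fun a b hba (ha : a < p.parts a) => show b < p.parts b by have := p.antitone hba; omega)
    i).symm

lemma conjugate_parts (p : IntPartition) (j : ℕ) : p.conjugate.parts j = p.conj j := rfl

lemma durfee_conjugate (p : IntPartition) : p.conjugate.durfee = p.durfee := by
  unfold durfee
  exact congrArg Set.ncard (Set.ext fun i => p.lt_conj_iff i i)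

lemma lt_parts_iff (p : IntPartition) (i j : ℕ) :
    j < p.parts i ↔ 0 ≤ p.beta i + p.conjugate.beta j := by
  have := p.lt_conj_iff i j
  simp only [beta, conjugate_parts]
  omega

lemma beta_add_beta_conjugate_ne (p : IntPartition) (i j : ℕ) :
    p.beta i + p.conjugate.beta j ≠ -1 := by
  have := p.lt_conj_iff i j
  simp only [beta, conjugate_parts]
  omega

-- Only `⊆` needs the combinatorics; both sides have charge `0`, which forces equality.
lemma betaSet_conjugate (p : IntPartition) : p.conjugate.betaSet = BetaSet.conj p.betaSet := by
  refine eq_of_subset_of_charge_eq ?_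
    (hasFiniteSupport_defect_conj p.hasFiniteSupport_defect_betaSet)
    p.conjugate.hasFiniteSupport_defect_betaSet
    (by rw [charge_betaSet, charge_conj, charge_betaSet, neg_zero])
  rintro _ ⟨j, rfl⟩ ⟨i, hi⟩
  have : p.beta i = -1 - p.conjugate.beta j := hi
  exact p.beta_add_beta_conjugate_ne i j (by omega)

lemma exists_lt_durfee_beta_eq_iff (p : IntPartition) (m : ℤ) :
    (∃ i < p.durfee, p.beta i = m) ↔ 0 ≤ m ∧ m ∈ p.betaSet := by
  constructor
  · rintro ⟨i, hi, rfl⟩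
    have := (p.lt_durfee_iff i).1 hi
    exact ⟨by simp only [beta]; omega, i, rfl⟩
  · rintro ⟨hm, i, rfl⟩
    exact ⟨i, (p.lt_durfee_iff i).2 (by omega), rfl⟩

lemma isDoubledDistinct_iff (p : IntPartition) :
    p.IsDoubledDistinct ↔ BetaSet.IsDoubledDistinct p.betaSet := by
  have hf : StrictAnti fun i : Fin p.durfee => p.beta i := fun i j hij => p.beta_strictAnti hij
  have hg : StrictAnti fun i : Fin p.durfee => p.conjugate.beta i + 1 := fun i j hij => by
    simpa using p.conjugate.beta_strictAnti hij
  rw [isDoubledDistinct_iff_nonneg]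
  -- Both sides say `{β i | i < D} = {β* i + 1 | i < D}`: the left one termwise, the right one
  -- as sets, via `betaSet_conjugate`.
  trans (Set.range fun i : Fin p.durfee => p.beta i) =
    Set.range fun i : Fin p.durfee => p.conjugate.beta i + 1
  · rw [hf.range_inj hg, funext_iff, Fin.forall_iff]
    simp only [IntPartition.IsDoubledDistinct, beta, conjugate_parts]
    exact forall₂_congr fun i _ => by omega
  · rw [Set.ext_iff]
    refine forall_congr' fun m => ?_
    have hconj := p.conjugate.exists_lt_durfee_beta_eq_iff (m - 1)
    rw [durfee_conjugate, betaSet_conjugate] at hconj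
    simp only [Set.mem_range, Fin.exists_iff, exists_prop, ← eq_sub_iff_add_eq,
      exists_lt_durfee_beta_eq_iff, hconj, BetaSet.conj, Set.mem_ofPred_eq]
    rw [show -1 - (m - 1) = -m by ring]

lemma mem_hooks_iff (p : IntPartition) {h : ℕ} :
    h ∈ p.hooks ↔ ∃ i j, j < p.parts i ∧ p.hook i j = h := by
  simp [hooks, cellsFinset, cells]

lemma hook_eq (p : IntPartition) {i j : ℕ} (hij : j < p.parts i) :
    (p.hook i j : ℤ) = p.beta i + p.conjugate.beta j + 1 := by
  have := (p.lt_conj_iff i j).2 hij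
  simp only [hook, beta, conjugate_parts]
  omega

-- By `hook_eq` and `betaSet_conjugate`, hooks are the pairs `m < b` with `b ∈ Z`, `m ∉ Z`,
-- and the hook length is `b - m`.
lemma isCore_iff (p : IntPartition) (t : ℕ) : p.IsCore t ↔ BetaSet.IsCore t p.betaSet := by
  constructor
  · intro hcore m hm
    obtain ⟨i, rfl⟩ : ∃ i, p.beta i = m := hm
    by_contra hmt
    rcases Nat.eq_zero_or_pos t with rfl | ht
    · exact hmt (by simpa using ⟨i, rfl⟩)
    have hmem : -1 - (p.beta i - t) ∈ p.conjugate.betaSet := by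
      rw [betaSet_conjugate]
      simpa [BetaSet.conj] using hmt
    obtain ⟨j, hj⟩ := hmem
    have hj' : p.conjugate.beta j = -1 - (p.beta i - t) := hj
    have hij : j < p.parts i := (p.lt_parts_iff i j).2 (by omega)
    refine hcore t ((mem_hooks_iff p).2 ⟨i, j, hij, ?_⟩) dvd_rfl
    have := p.hook_eq hij
    omega
  · rintro hclosed h hh ⟨n, hn⟩
    obtain ⟨i, j, hij, rfl⟩ := (mem_hooks_iff p).1 hh
    have hmem := hclosed.sub_mul_mem (m := p.beta i) ⟨i, rfl⟩ n
    have hnot : -1 - p.conjugate.beta j ∉ p.betaSet := by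
      have : p.conjugate.beta j ∈ BetaSet.conj p.betaSet := betaSet_conjugate p ▸ ⟨j, rfl⟩
      simpa [BetaSet.conj] using this
    have := p.hook_eq hij
    have hn' : (p.hook i j : ℤ) = t * n := by exact_mod_cast hn
    exact hnot (by convert hmem using 1; omega)

variable {t : ℕ}

noncomputable def littlewoodCore (t : ℕ) (p : IntPartition) : IntPartition :=
  invFun betaSet (core t p.betaSet)

noncomputable def littlewoodQuotient (t : ℕ) (p : IntPartition) (k : ℕ) : IntPartition :=
  invFun betaSet (quotient t p.betaSet k)

lemma betaSet_littlewoodCore (ht : 0 < t) (p : IntPartition) :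
    (littlewoodCore t p).betaSet = core t p.betaSet :=
  betaSet_invFun (hasFiniteSupport_defect_core ht)
    (by rw [charge_core ht p.hasFiniteSupport_defect_betaSet, charge_betaSet])

lemma betaSet_littlewoodQuotient {k : ℕ} (hk : k < t) (p : IntPartition) :
    (littlewoodQuotient t p k).betaSet = quotient t p.betaSet k :=
  betaSet_invFun (hasFiniteSupport_defect_quotient hk p.hasFiniteSupport_defect_betaSet)
    (charge_quotient hk p.hasFiniteSupport_defect_betaSet)

lemma isLittlewood_littlewoodCore (ht : 0 < t) (p : IntPartition) :
    IsLittlewood t p (littlewoodCore t p) fun k => littlewoodQuotient t p (k % t) := by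
  refine ⟨fun k => charge (residue t k p.betaSet), fun k hk j => ?_, fun k hk j => ?_⟩
  · show j ∈ (littlewoodQuotient t p (k % t)).betaSet ↔ _
    rw [Nat.mod_eq_of_lt hk, betaSet_littlewoodQuotient hk]
    rfl
  · have := Set.ext_iff.1 (residue_core (Z := p.betaSet) hk) (j + charge (residue t k p.betaSet))
    rw [Set.mem_Iio, add_lt_iff_neg_right] at this
    show (t : ℤ) * (j + charge (residue t k p.betaSet)) + k ∈ (littlewoodCore t p).betaSet ↔
      j < 0
    rw [betaSet_littlewoodCore ht]
    exact this

lemma weight_eq_weight_littlewoodCore_add (ht : 0 < t) (p : IntPartition) :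
    p.weight = (littlewoodCore t p).weight +
      t * ∑ k ∈ Finset.range t, (littlewoodQuotient t p k).weight := by
  have h := energy_eq_energy_core_add ht p.hasFiniteSupport_defect_betaSet
  rw [energy_betaSet, ← betaSet_littlewoodCore ht, energy_betaSet,
    Finset.sum_congr rfl fun k hk => by
      rw [← betaSet_littlewoodQuotient (Finset.mem_range.1 hk), energy_betaSet]] at h
  exact_mod_cast h

lemma isCore_littlewoodCore (ht : 0 < t) (p : IntPartition) : (littlewoodCore t p).IsCore t := by
  rw [isCore_iff, betaSet_littlewoodCore ht]
  exact isCore_core ht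

lemma isDoubledDistinct_iff_littlewood (ht : 0 < t) (p : IntPartition) :
    p.IsDoubledDistinct ↔ (littlewoodCore t p).IsDoubledDistinct ∧
      (littlewoodQuotient t p 0).IsDoubledDistinct ∧ ∀ k, 0 < k → k < t →
        littlewoodQuotient t p (t - k) = (littlewoodQuotient t p k).conjugate := by
  rw [isDoubledDistinct_iff, isDoubledDistinct_iff, isDoubledDistinct_iff,
    betaSet_littlewoodCore ht, betaSet_littlewoodQuotient ht,
    isDoubledDistinct_iff_core_quotient ht]
  refine and_congr_right fun _ => and_congr_right fun _ => forall_congr' fun k =>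
    imp_congr_right fun _ => imp_congr_right fun hkt => ?_
  rw [← betaSet_injective.eq_iff, betaSet_conjugate, betaSet_littlewoodQuotient (by omega),
    betaSet_littlewoodQuotient hkt]

lemma eq_of_littlewood_eq (ht : 0 < t) {p q : IntPartition}
    (hcore : littlewoodCore t p = littlewoodCore t q)
    (hquot : ∀ k < t, littlewoodQuotient t p k = littlewoodQuotient t q k) : p = q :=
  betaSet_injective <| eq_of_core_eq_of_quotient_eq ht
    (by rw [← betaSet_littlewoodCore ht, hcore, betaSet_littlewoodCore ht]) fun k hk => by
      rw [← betaSet_littlewoodQuotient hk, hquot k hk, betaSet_littlewoodQuotient hk]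

lemma exists_littlewood_eq (ht : 0 < t) {C : IntPartition} (hC : C.IsCore t)
    (Q : ℕ → IntPartition) :
    ∃ p : IntPartition, littlewoodCore t p = C ∧ ∀ k < t, littlewoodQuotient t p k = Q k := by
  have hQ : ∀ k < t, (defect (Q k).betaSet).HasFiniteSupport := fun k _ =>
    (Q k).hasFiniteSupport_defect_betaSet
  have hQc : ∀ k < t, charge (Q k).betaSet = 0 := fun k _ => (Q k).charge_betaSet
  have hC' := C.hasFiniteSupport_defect_betaSet
  obtain ⟨p, hp⟩ := exists_betaSet_eq (hasFiniteSupport_defect_ofCoreQuotient ht hQ)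
    ((charge_ofCoreQuotient ht hC' hQ hQc).trans C.charge_betaSet)
  refine ⟨p, betaSet_injective ?_, fun k hk => betaSet_injective ?_⟩
  · rw [betaSet_littlewoodCore ht, hp, core_ofCoreQuotient ht hC' ((isCore_iff C t).1 hC) hQ hQc]
  · rw [betaSet_littlewoodQuotient hk, hp, quotient_ofCoreQuotient hk (hQ k hk) (hQc k hk)]

end IntPartition


theorem littlewood_dd_bijection (t : ℕ) (ht : 0 < t) :
    ∃ Φ : {p : IntPartition // p.IsDoubledDistinct} ≃
      {q : IntPartition × (Fin t → IntPartition) //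
        q.1.IsDoubledDistinct ∧ q.1.IsCore t ∧ (q.2 ⟨0, ht⟩).IsDoubledDistinct ∧
        ∀ i : Fin t, ∀ _ : i.val ≠ 0,
          q.2 ⟨t - i.val, by have := i.isLt; omega⟩ = (q.2 i).conjugate},
      ∀ p : {p : IntPartition // p.IsDoubledDistinct},
        IsLittlewood t p.1 (Φ p).1.1 (fun k => (Φ p).1.2 ⟨k % t, Nat.mod_lt _ ht⟩) ∧
        p.1.weight = (Φ p).1.1.weight + t * ∑ k : Fin t, ((Φ p).1.2 k).weight := by
  open IntPartition in
  refine ⟨Equiv.ofBijective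
    (fun p => ⟨(littlewoodCore t p, fun i => littlewoodQuotient t p i), ?mem⟩) ⟨?inj, ?surj⟩,
    fun p => ⟨isLittlewood_littlewoodCore ht p, ?weight⟩⟩
  case mem =>
    obtain ⟨hC, hQ0, hQ⟩ := (isDoubledDistinct_iff_littlewood ht p.1).1 p.2
    exact ⟨hC, isCore_littlewoodCore ht p, hQ0, fun i hi => hQ i (Nat.pos_of_ne_zero hi) i.isLt⟩
  case inj =>
    intro p q h
    simp only [Subtype.mk.injEq, Prod.mk.injEq, funext_iff] at h
    exact Subtype.ext (eq_of_littlewood_eq ht h.1 fun k hk => h.2 ⟨k, hk⟩)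
  case surj =>
    rintro ⟨⟨C, Q⟩, hC, hCcore, hQ0, hQ⟩
    obtain ⟨p, rfl, hp⟩ := exists_littlewood_eq ht hCcore fun k => Q ⟨k % t, Nat.mod_lt _ ht⟩
    have hpQ : ∀ i : Fin t, littlewoodQuotient t p i = Q i := fun i => by
      rw [hp i i.isLt]
      exact congrArg Q (Fin.ext (Nat.mod_eq_of_lt i.isLt))
    refine ⟨⟨p, (isDoubledDistinct_iff_littlewood ht p).2 ⟨hC, ?_, fun k hk0 hkt => ?_⟩⟩, ?_⟩
    · simpa [hpQ ⟨0, ht⟩] using hQ0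
    · simpa [hpQ ⟨k, hkt⟩, hpQ ⟨t - k, by omega⟩] using hQ ⟨k, hkt⟩ (by simp; omega)
    · simp [hpQ]
  case weight =>
    have := weight_eq_weight_littlewoodCore_add ht p.1
    rwa [← Fin.sum_univ_eq_sum_range] at this
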